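/- arXiv:2310.02198 — 2 statements merged into one kernel-verified Lean document; each statement's English description precedes it below -/
import Mathlib

section
/- There is no convex 1-dimensional geometric interpretation η assigning nonempty intervals η(A), η(B), η(C) ⊆ ℝ to three concept names such that all pairwise intersections η(A) ∩ η(B), η(B) ∩ η(C), η(A) ∩ η(C) and the triple intersection η(A) ∩ η(B) ∩ η(C) are nonempty, while simultaneously each of η(A) \ (η(B) ∪ η(C)), η(B) \ (η(A) ∪ η(C)), and η(C) \ (η(A) ∪ η(B)) is nonempty. -/
/-!
A convex subset of `ℝ` is an interval. Given a common point `p` of the three intervals and, for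
each interval, a witness lying outside the other two, two of the three witnesses lie on the same
side of `p`. Of those two, the one closer to `p` lies between `p` and the other, hence in the other
witness's interval, contradicting the choice of witnesses.
-/

section LinearOrder

variable {α : Type*} [LinearOrder α]

def SameSide (p x y : α) : Prop := (x ≤ p ∧ y ≤ p) ∨ (p ≤ x ∧ p ≤ y)

theorem sameSide_or_sameSide_or_sameSide (p a b c : α) :
    SameSide p a b ∨ SameSide p b c ∨ SameSide p a c := by
  unfold SameSide
  rcases le_total a p with ha | ha <;> rcases le_total b p with hb | hb <;>
    rcases le_total c p with hc | hc <;> simp_all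

end LinearOrder

namespace Set.OrdConnected

variable {α : Type*} [LinearOrder α] {S T U : Set α} {p x y : α}

theorem mem_or_mem_of_sameSide (hS : S.OrdConnected) (hT : T.OrdConnected)
    (hpS : p ∈ S) (hpT : p ∈ T) (hx : x ∈ S) (hy : y ∈ T) (hxy : SameSide p x y) :
    x ∈ T ∨ y ∈ S := by
  rcases hxy with ⟨hxp, hyp⟩ | ⟨hpx, hpy⟩ <;> rcases le_total x y with h | h
  · exact .inr (hS.out hx hpS ⟨h, hyp⟩)
  · exact .inl (hT.out hy hpT ⟨h, hxp⟩)
  · exact .inl (hT.out hpT hy ⟨hpx, h⟩)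
  · exact .inr (hS.out hpS hx ⟨hpy, h⟩)

theorem not_diff_nonempty_of_inter_nonempty (hS : S.OrdConnected) (hT : T.OrdConnected)
    (hU : U.OrdConnected) (hSTU : (S ∩ T ∩ U).Nonempty) :
    ¬ ((S \ (T ∪ U)).Nonempty ∧ (T \ (S ∪ U)).Nonempty ∧ (U \ (S ∪ T)).Nonempty) := by
  obtain ⟨p, ⟨hpS, hpT⟩, hpU⟩ := hSTU
  rintro ⟨⟨a, haS, haTU⟩, ⟨b, hbT, hbSU⟩, ⟨c, hcU, hcST⟩⟩
  rcases sameSide_or_sameSide_or_sameSide p a b c with hab | hbc | hac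
  · rcases mem_or_mem_of_sameSide hS hT hpS hpT haS hbT hab with h | h
    exacts [haTU (.inl h), hbSU (.inl h)]
  · rcases mem_or_mem_of_sameSide hT hU hpT hpU hbT hcU hbc with h | h
    exacts [hbSU (.inr h), hcST (.inr h)]
  · rcases mem_or_mem_of_sameSide hS hU hpS hpU haS hcU hac with h | h
    exacts [haTU (.inr h), hcST (.inl h)]

end Set.OrdConnected

theorem no_convex_one_dim_faithful :
    ¬ ∃ A B C : Set ℝ,
      Convex ℝ A ∧ Convex ℝ B ∧ Convex ℝ C ∧
      A.Nonempty ∧ B.Nonempty ∧ C.Nonempty ∧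
      (A ∩ B).Nonempty ∧ (B ∩ C).Nonempty ∧ (A ∩ C).Nonempty ∧
      (A ∩ B ∩ C).Nonempty ∧
      (A \ (B ∪ C)).Nonempty ∧
      (B \ (A ∪ C)).Nonempty ∧
      (C \ (A ∪ B)).Nonempty := by
  rintro ⟨A, B, C, hA, hB, hC, -, -, -, -, -, -, hABC, hA', hB', hC'⟩
  exact hA.ordConnected.not_diff_nonempty_of_inter_nonempty hB.ordConnected hC.ordConnected
    hABC ⟨hA', hB', hC'⟩
end

section
/- If I₁, I₂, I₃ are convex subsets (intervals) of ℝ with nonempty common intersection I₁ ∩ I₂ ∩ I₃ ≠ ∅, then at least one of the three intervals is contained in the union of the other two. -/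
/-!
Pick `p` in the common intersection and, if no interval is covered by the other two, a point
`xᵢ ∈ Iᵢ` outside the other two. Two of the `xᵢ` lie on the same side of `p`, and then the one
closer to `p` lies between the other and `p`, hence in the other's interval.
-/

theorem Set.OrdConnected.lt_lt_or_lt_lt_of_mem_diff {α : Type*} [LinearOrder α] {A B : Set α}
    (hA : A.OrdConnected) (hB : B.OrdConnected) {p a b : α} (hpA : p ∈ A) (hpB : p ∈ B)
    (ha : a ∈ A \ B) (hb : b ∈ B \ A) : (a < p ∧ p < b) ∨ (b < p ∧ p < a) := by
  have hap : a ≠ p := (ne_of_mem_of_not_mem hpB ha.2).symm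
  have hbp : b ≠ p := (ne_of_mem_of_not_mem hpA hb.2).symm
  rcases hap.lt_or_gt with hap | hap <;> rcases hbp.lt_or_gt with hbp | hbp
  · rcases le_total a b with hab | hba
    · exact absurd (hA.out ha.1 hpA ⟨hab, hbp.le⟩) hb.2
    · exact absurd (hB.out hb.1 hpB ⟨hba, hap.le⟩) ha.2
  · exact Or.inl ⟨hap, hbp⟩
  · exact Or.inr ⟨hbp, hap⟩
  · rcases le_total a b with hab | hba
    · exact absurd (hB.out hpB hb.1 ⟨hap.le, hab⟩) ha.2
    · exact absurd (hA.out hpA ha.1 ⟨hbp.le, hba⟩) hb.2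

theorem interval_covered_by_others (I₁ I₂ I₃ : Set ℝ)
    (h₁ : Convex ℝ I₁) (h₂ : Convex ℝ I₂) (h₃ : Convex ℝ I₃)
    (hne : (I₁ ∩ I₂ ∩ I₃).Nonempty) :
    I₁ ⊆ I₂ ∪ I₃ ∨ I₂ ⊆ I₁ ∪ I₃ ∨ I₃ ⊆ I₁ ∪ I₂ := by
  obtain ⟨p, ⟨hp₁, hp₂⟩, hp₃⟩ := hne
  by_contra! h
  simp only [Set.not_subset, Set.mem_union, not_or] at h
  obtain ⟨⟨x₁, hx₁, hx₁'⟩, ⟨x₂, hx₂, hx₂'⟩, ⟨x₃, hx₃, hx₃'⟩⟩ := h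
  have h₁₂ := h₁.ordConnected.lt_lt_or_lt_lt_of_mem_diff h₂.ordConnected hp₁ hp₂
    ⟨hx₁, hx₁'.1⟩ ⟨hx₂, hx₂'.1⟩
  have h₁₃ := h₁.ordConnected.lt_lt_or_lt_lt_of_mem_diff h₃.ordConnected hp₁ hp₃
    ⟨hx₁, hx₁'.2⟩ ⟨hx₃, hx₃'.1⟩
  have h₂₃ := h₂.ordConnected.lt_lt_or_lt_lt_of_mem_diff h₃.ordConnected hp₂ hp₃
    ⟨hx₂, hx₂'.2⟩ ⟨hx₃, hx₃'.2⟩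
  rcases h₁₂ with h₁₂ | h₁₂ <;> rcases h₁₃ with h₁₃ | h₁₃ <;> rcases h₂₃ with h₂₃ | h₂₃ <;>
    linarith [h₁₂.1, h₁₂.2, h₁₃.1, h₁₃.2, h₂₃.1, h₂₃.2]
end
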